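/- Let X be a real or complex normed linear space. If a series ∑_{n=0}^∞ u_n with terms in X is (C,1) summable in X to some S ∈ X and satisfies Hardy's condition ‖u_n‖ = O(1/n) as n → ∞, then the series converges in X (to S). -/

import Mathlib

/-!
Write `s n` for the partial sums and `σ n` for their Cesàro means. The delayed-mean identity
`d • (s n - S) = (n + d + 1) • (σ (n + d) - S) - (n + 1) • (σ n - S) - ∑_{n < k ≤ n + d} (s k - s n)`
with delay `d = n / q` has bounded weights `(n + d + 1) / d` and `(n + 1) / d`, so its first two
terms tend to `0`, while Hardy's condition `‖u k‖ ≤ C / k` bounds every `s k - s n` in the window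
by `C / q`. Hence `limsup ‖s n - S‖ ≤ C / q` for every `q`.
-/

open Filter Finset Topology

lemma sum_range_add_one_sub_sum_range_add_one {G : Type*} [AddCommGroup G] (f : ℕ → G)
    {n k : ℕ} (hnk : n ≤ k) :
    ∑ i ∈ range (k + 1), f i - ∑ i ∈ range (n + 1), f i = ∑ i ∈ Ioc n k, f i := by
  rw [← Ico_add_one_add_one_eq_Ioc, sum_Ico_eq_sub _ (by omega)]

lemma add_one_div_natDiv_le_two_mul {n q : ℕ} (hq : 0 < q) (hqn : q ≤ n) :
    ((n : ℝ) + 1) / (n / q : ℕ) ≤ 2 * q := by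
  have hd : 1 ≤ n / q := (Nat.one_le_div_iff hq).2 hqn
  have hlt := Nat.lt_div_mul_add (a := n) hq
  have hnat : n + 1 ≤ 2 * q * (n / q) := by nlinarith
  rw [div_le_iff₀ (by exact_mod_cast hd)]
  exact_mod_cast hnat

section Seminormed

variable {E : Type*} [SeminormedAddCommGroup E]

/-- Schmidt's slow oscillation, with `λ = 1 + 1/q`: eventually `‖s k - s n‖ ≤ ε` for
`n < k ≤ λ n`. -/
def SlowlyOscillating (s : ℕ → E) : Prop :=
  ∀ ε > 0, ∃ q : ℕ, 0 < q ∧ ∀ᶠ n in atTop, ∀ k ∈ Ioc n (n + n / q), ‖s k - s n‖ ≤ ε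

theorem slowlyOscillating_partialSums_of_isBigO_one_div {u : ℕ → E}
    (hu : (fun n => ‖u n‖) =O[atTop] fun n => 1 / (n : ℝ)) :
    SlowlyOscillating fun n => ∑ k ∈ range (n + 1), u k := by
  obtain ⟨C, hC, hCu⟩ := hu.exists_pos
  obtain ⟨N, hN⟩ := eventually_atTop.1 hCu.bound
  intro ε hε
  obtain ⟨q, hq⟩ := exists_nat_gt (C / ε)
  have hq₀ : (0 : ℝ) < q := (div_pos hC hε).trans hq
  refine ⟨q, by exact_mod_cast hq₀, ?_⟩
  filter_upwards [eventually_ge_atTop N] with n hn k hk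
  have hterm : ∀ j ∈ Ioc n k, ‖u j‖ ≤ C / (n + 1) := by
    intro j hj
    rw [mem_Ioc] at hj
    have hj₁ : (n : ℝ) + 1 ≤ j := by exact_mod_cast hj.1
    calc ‖u j‖ ≤ C * ‖1 / (j : ℝ)‖ := by simpa using hN j (by omega)
      _ = C / j := by rw [Real.norm_of_nonneg (by positivity)]; ring
      _ ≤ C / (n + 1) := by gcongr
  calc ‖∑ i ∈ range (k + 1), u i - ∑ i ∈ range (n + 1), u i‖ = ‖∑ j ∈ Ioc n k, u j‖ := by
        rw [sum_range_add_one_sub_sum_range_add_one u (mem_Ioc.1 hk).1.le]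
    _ ≤ (k - n : ℕ) * (C / (n + 1)) := by simpa using norm_sum_le_of_le _ hterm
    _ ≤ (n : ℝ) / q * (C / (n + 1)) := by
        have hkn : k - n ≤ n / q := Nat.sub_le_iff_le_add'.2 (mem_Ioc.1 hk).2
        gcongr
        exact (Nat.cast_le.2 hkn).trans Nat.cast_div_le
    _ ≤ C / q := by
        rw [div_mul_div_comm, div_le_div_iff₀ (by positivity) hq₀]
        nlinarith
    _ ≤ ε := by
        rw [div_le_iff₀ hq₀]
        have := (div_lt_iff₀ hε).1 hq
        linarith

variable [NormedSpace ℝ E]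

noncomputable def cesaroMean (s : ℕ → E) (n : ℕ) : E :=
  ((n : ℝ) + 1)⁻¹ • ∑ i ∈ range (n + 1), s i

lemma succ_smul_cesaroMean (s : ℕ → E) (n : ℕ) :
    ((n : ℝ) + 1) • cesaroMean s n = ∑ i ∈ range (n + 1), s i :=
  smul_inv_smul₀ (by positivity) _

lemma smul_sub_eq_delayedMean (s : ℕ → E) (S : E) (n d : ℕ) :
    (d : ℝ) • (s n - S) = ((n : ℝ) + d + 1) • (cesaroMean s (n + d) - S)
      - ((n : ℝ) + 1) • (cesaroMean s n - S) - ∑ k ∈ Ioc n (n + d), (s k - s n) := by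
  have hlong := succ_smul_cesaroMean s (n + d)
  push_cast at hlong
  rw [sum_sub_distrib, ← sum_range_add_one_sub_sum_range_add_one s (Nat.le_add_right n d),
    ← hlong, ← succ_smul_cesaroMean, sum_const, Nat.card_Ioc, Nat.add_sub_cancel_left,
    ← Nat.cast_smul_eq_nsmul ℝ]
  module

lemma norm_sub_le_of_delayedMean (s : ℕ → E) (S : E) {n d : ℕ} (hd : 0 < d) {B : ℝ}
    (hB : ∀ k ∈ Ioc n (n + d), ‖s k - s n‖ ≤ B) :
    ‖s n - S‖ ≤ (n + d + 1) / d * ‖cesaroMean s (n + d) - S‖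
      + (n + 1) / d * ‖cesaroMean s n - S‖ + B := by
  have hd' : (0 : ℝ) < d := by exact_mod_cast hd
  have hwindow : ‖∑ k ∈ Ioc n (n + d), (s k - s n)‖ ≤ d * B := by
    simpa using norm_sum_le_of_le _ hB
  have hsmul : (d : ℝ) * ‖s n - S‖ ≤ (n + d + 1) * ‖cesaroMean s (n + d) - S‖
      + (n + 1) * ‖cesaroMean s n - S‖ + d * B := by
    calc (d : ℝ) * ‖s n - S‖ = ‖(d : ℝ) • (s n - S)‖ := by
          rw [norm_smul, Real.norm_of_nonneg hd'.le]
      _ ≤ ‖((n : ℝ) + d + 1) • (cesaroMean s (n + d) - S)‖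
          + ‖((n : ℝ) + 1) • (cesaroMean s n - S)‖ + ‖∑ k ∈ Ioc n (n + d), (s k - s n)‖ := by
          rw [smul_sub_eq_delayedMean]
          exact (norm_sub_le _ _).trans (add_le_add_left (norm_sub_le _ _) _)
      _ ≤ _ := by
          rw [norm_smul, norm_smul, Real.norm_of_nonneg (by positivity),
            Real.norm_of_nonneg (by positivity)]
          gcongr
  calc ‖s n - S‖ = (d * ‖s n - S‖) / d := by field_simp
    _ ≤ ((n + d + 1) * ‖cesaroMean s (n + d) - S‖
      + (n + 1) * ‖cesaroMean s n - S‖ + d * B) / d := by gcongr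
    _ = _ := by field_simp

theorem SlowlyOscillating.tendsto_of_tendsto_cesaroMean {s : ℕ → E} {S : E}
    (hs : SlowlyOscillating s) (hσ : Tendsto (cesaroMean s) atTop (𝓝 S)) :
    Tendsto s atTop (𝓝 S) := by
  rw [Metric.tendsto_nhds]
  intro ε hε
  obtain ⟨q, hq, hosc⟩ := hs (ε / 2) (half_pos hε)
  have hσ₀ : Tendsto (fun n => ‖cesaroMean s n - S‖) atTop (𝓝 0) :=
    tendsto_iff_norm_sub_tendsto_zero.1 hσ
  have hdelay : Tendsto (fun n => n + n / q) atTop atTop :=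
    tendsto_atTop_mono (fun n => Nat.le_add_right n _) tendsto_id
  have hbound : Tendsto (fun n => (1 + 2 * q) * ‖cesaroMean s (n + n / q) - S‖
      + 2 * q * ‖cesaroMean s n - S‖ + ε / 2) atTop (𝓝 (ε / 2)) := by
    simpa using (((hσ₀.comp hdelay).const_mul _).add (hσ₀.const_mul _)).add_const (ε / 2)
  filter_upwards [hosc, eventually_ge_atTop q, hbound.eventually (gt_mem_nhds (half_lt_self hε))]
    with n hwindow hqn hlt
  have hd : 0 < n / q := Nat.div_pos hqn hq
  have hweight := add_one_div_natDiv_le_two_mul hq hqn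
  have hweight' : ((n : ℝ) + (n / q : ℕ) + 1) / (n / q : ℕ) ≤ 1 + 2 * q := by
    rw [add_right_comm, add_div, div_self (by positivity)]
    linarith
  rw [dist_eq_norm]
  calc ‖s n - S‖ ≤ (n + (n / q : ℕ) + 1) / (n / q : ℕ) * ‖cesaroMean s (n + n / q) - S‖
        + (n + 1) / (n / q : ℕ) * ‖cesaroMean s n - S‖ + ε / 2 :=
        norm_sub_le_of_delayedMean s S hd hwindow
    _ ≤ (1 + 2 * q) * ‖cesaroMean s (n + n / q) - S‖ + 2 * q * ‖cesaroMean s n - S‖ + ε / 2 := by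
        gcongr
    _ < ε := hlt

end Seminormed

/-- **Hardy's Tauberian theorem in a normed space** (Corollary 1). If a series `∑ u_n` in a
real or complex normed linear space `X` is `(C,1)` summable to `S ∈ X` and satisfies
Hardy's condition `‖u_n‖ = O(1/n)` as `n → ∞`, then the series converges in `X` to `S`. -/
theorem tauberian_cesaro_hardy
    {X : Type*} [NormedAddCommGroup X] [NormedSpace ℝ X]
    (u : ℕ → X) (S : X)
    (hC1 : Tendsto (fun n : ℕ =>
        ((n : ℝ) + 1)⁻¹ • ∑ i ∈ range (n + 1), ∑ k ∈ range (i + 1), u k)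
      atTop (𝓝 S))
    (hHardy : (fun n : ℕ => ‖u n‖) =O[atTop] fun n : ℕ => 1 / (n : ℝ)) :
    Tendsto (fun n : ℕ => ∑ k ∈ range (n + 1), u k) atTop (𝓝 S) :=
  (slowlyOscillating_partialSums_of_isBigO_one_div hHardy).tendsto_of_tendsto_cesaroMean hC1
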